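/- Let H_i be Hilbert spaces indexed by points of a finite set P ⊆ [0,1], and let S, T be families of bounded operators S_{p,q}, T_{p,q} : H_p → H_q for p < q in P, with ‖T_{p,q}‖ ≤ 1 for all p < q, S satisfying the composition property (S_{q,r} ∘ S_{p,q} = S_{p,r}), and ‖S_{p,q} - T_{p,q}‖ ≤ F(q - p) for consecutive points p, q of P, where F : ℝ≥0 → ℝ≥0. Then for any p < q in P with intermediate consecutive points p = q_1 < ⋯ < q_m = q, ‖S_{p,q} - T_{q_{m-1},q_m} ∘ ⋯ ∘ T_{q_1,q_2}‖ ≤ exp(Σ_{i=1}^{m-1} F(q_{i+1} - q_i)) - 1. -/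

import Mathlib

/-- Composition of the operators between consecutive indices. -/
def opChain9 {H : ℕ → Type*} [∀ i, NormedAddCommGroup (H i)]
    [∀ i, InnerProductSpace ℝ (H i)]
    (T : ∀ i j : ℕ, H i →L[ℝ] H j) (i : ℕ) : ∀ k : ℕ, H i →L[ℝ] H (i + k)
  | 0 => ContinuousLinearMap.id ℝ (H i)
  | (k + 1) => (T (i + k) (i + k + 1)).comp (opChain9 T i k)

/-!
Write `S i (i + m)` as the chain `S_{m-1} ∘ ⋯ ∘ S_0` of its consecutive steps (composition
closedness) and compare it with `T_{m-1} ∘ ⋯ ∘ T_0` one factor at a time. With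
`δ_j = ‖S_j - T_j‖`, the `S`-chain has norm at most `∏ (1 + δ_j)` and the `T`-chain at most `1`,
so `S_k ∘ A - T_k ∘ C = (S_k - T_k) ∘ A + T_k ∘ (A - C)` turns the error `∏_{j<k} (1 + δ_j) - 1`
into `∏_{j≤k} (1 + δ_j) - 1`. Finally `∏ (1 + δ_j) ≤ exp (∑ δ_j) ≤ exp (∑ F (Δq_j))`.
-/

theorem ContinuousLinearMap.norm_comp_sub_comp_le {𝕜 E F G : Type*} [NontriviallyNormedField 𝕜]
    [SeminormedAddCommGroup E] [SeminormedAddCommGroup F] [SeminormedAddCommGroup G]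
    [NormedSpace 𝕜 E] [NormedSpace 𝕜 F] [NormedSpace 𝕜 G]
    (g g' : F →L[𝕜] G) (f f' : E →L[𝕜] F) :
    ‖g.comp f - g'.comp f'‖ ≤ ‖g - g'‖ * ‖f‖ + ‖g'‖ * ‖f - f'‖ := by
  have hsplit : g.comp f - g'.comp f' = (g - g').comp f + g'.comp (f - f') := by
    rw [ContinuousLinearMap.sub_comp, ContinuousLinearMap.comp_sub]
    abel
  rw [hsplit]
  exact (norm_add_le _ _).trans (add_le_add (opNorm_comp_le _ _) (opNorm_comp_le _ _))

section opChain9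

variable {H : ℕ → Type*} [∀ i, NormedAddCommGroup (H i)] [∀ i, InnerProductSpace ℝ (H i)]

theorem norm_opChain9_le_prod (T : ∀ i j : ℕ, H i →L[ℝ] H j) (i k : ℕ) :
    ‖opChain9 T i k‖ ≤ ∏ j ∈ Finset.range k, ‖T (i + j) (i + j + 1)‖ := by
  induction k with
  | zero => exact ContinuousLinearMap.norm_id_le
  | succ k ih =>
    rw [opChain9, Finset.prod_range_succ, mul_comm]
    exact (ContinuousLinearMap.opNorm_comp_le _ _).trans
      (mul_le_mul_of_nonneg_left ih (norm_nonneg _))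

theorem norm_opChain9_le_one {T : ∀ i j : ℕ, H i →L[ℝ] H j}
    (hT : ∀ j, ‖T j (j + 1)‖ ≤ 1) (i k : ℕ) : ‖opChain9 T i k‖ ≤ 1 :=
  (norm_opChain9_le_prod T i k).trans
    (Finset.prod_le_one (fun _ _ ↦ norm_nonneg _) fun j _ ↦ hT (i + j))

theorem norm_opChain9_sub_le {S T : ∀ i j : ℕ, H i →L[ℝ] H j}
    (hT : ∀ j, ‖T j (j + 1)‖ ≤ 1) (i k : ℕ) :
    ‖opChain9 S i k - opChain9 T i k‖
      ≤ ∏ j ∈ Finset.range k, (1 + ‖S (i + j) (i + j + 1) - T (i + j) (i + j + 1)‖) - 1 := by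
  induction k with
  | zero => simp [opChain9]
  | succ k ih =>
    set δ := ‖S (i + k) (i + k + 1) - T (i + k) (i + k + 1)‖
    set P := ∏ j ∈ Finset.range k, (1 + ‖S (i + j) (i + j + 1) - T (i + j) (i + j + 1)‖)
    have hS : ‖opChain9 S i k‖ ≤ P :=
      (norm_opChain9_le_prod S i k).trans <| Finset.prod_le_prod (fun _ _ ↦ norm_nonneg _)
        fun j _ ↦ (norm_le_insert' _ _).trans (add_le_add_left (hT (i + j)) _)
    calc ‖opChain9 S i (k + 1) - opChain9 T i (k + 1)‖
        ≤ δ * ‖opChain9 S i k‖ + ‖T (i + k) (i + k + 1)‖ * ‖opChain9 S i k - opChain9 T i k‖ :=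
          ContinuousLinearMap.norm_comp_sub_comp_le _ _ _ _
      _ ≤ δ * P + 1 * (P - 1) := by
          gcongr
          exact hT (i + k)
      _ = ∏ j ∈ Finset.range (k + 1),
            (1 + ‖S (i + j) (i + j + 1) - T (i + j) (i + j + 1)‖) - 1 := by
          rw [Finset.prod_range_succ]
          ring

theorem opChain9_eq_of_comp {S : ∀ i j : ℕ, H i →L[ℝ] H j}
    (hScomp : ∀ i j k : ℕ, i < j → j < k → (S j k).comp (S i j) = S i k) (i : ℕ) {m : ℕ}
    (hm : 1 ≤ m) : opChain9 S i m = S i (i + m) := by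
  induction m, hm using Nat.le_induction with
  | base => rfl
  | succ m hm ih =>
    rw [opChain9, ih]
    exact hScomp i (i + m) (i + m + 1) (by omega) (by omega)

end opChain9

theorem stmt9_general {H : ℕ → Type*} [∀ i, NormedAddCommGroup (H i)]
    [∀ i, InnerProductSpace ℝ (H i)]
    (q : ℕ → ℝ)
    (S T : ∀ i j : ℕ, H i →L[ℝ] H j) (F : ℝ → ℝ)
    (hT : ∀ i j : ℕ, i < j → ‖T i j‖ ≤ 1)
    (hScomp : ∀ i j k : ℕ, i < j → j < k → (S j k).comp (S i j) = S i k)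
    (hST : ∀ i : ℕ, ‖S i (i + 1) - T i (i + 1)‖ ≤ F (q (i + 1) - q i)) :
    ∀ i m : ℕ, 1 ≤ m →
      ‖S i (i + m) - opChain9 T i m‖
        ≤ Real.exp (∑ j ∈ Finset.range m, F (q (i + j + 1) - q (i + j))) - 1 := by
  intro i m hm
  rw [← opChain9_eq_of_comp hScomp i hm]
  calc ‖opChain9 S i m - opChain9 T i m‖
      ≤ ∏ j ∈ Finset.range m, (1 + ‖S (i + j) (i + j + 1) - T (i + j) (i + j + 1)‖) - 1 :=
        norm_opChain9_sub_le (fun j ↦ hT j (j + 1) j.lt_succ_self) i m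
    _ ≤ Real.exp (∑ j ∈ Finset.range m, ‖S (i + j) (i + j + 1) - T (i + j) (i + j + 1)‖) - 1 := by
        gcongr
        exact Real.prod_one_add_le_exp_sum _ fun _ ↦ norm_nonneg _
    _ ≤ Real.exp (∑ j ∈ Finset.range m, F (q (i + j + 1) - q (i + j))) - 1 := by
        gcongr with j
        exact hST (i + j)

/-- a composition-closed family `S` that `F`-approximates `T` on consecutive
points `q i < q (i+1)` lies within `exp (Σ F (Δq)) - 1` of the homogenization of `T`. -/
theorem stmt9 {H : ℕ → Type*} [∀ i, NormedAddCommGroup (H i)]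
    [∀ i, InnerProductSpace ℝ (H i)] [∀ i, CompleteSpace (H i)]
    (q : ℕ → ℝ) (hq : StrictMono q)
    (hq01 : ∀ i, q i ∈ Set.Icc (0 : ℝ) 1)
    (S T : ∀ i j : ℕ, H i →L[ℝ] H j) (F : ℝ → ℝ) (hF : ∀ t, 0 ≤ F t)
    (hT : ∀ i j : ℕ, i < j → ‖T i j‖ ≤ 1)
    (hScomp : ∀ i j k : ℕ, i < j → j < k → (S j k).comp (S i j) = S i k)
    (hST : ∀ i : ℕ, ‖S i (i + 1) - T i (i + 1)‖ ≤ F (q (i + 1) - q i)) :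
    ∀ i m : ℕ, 1 ≤ m →
      ‖S i (i + m) - opChain9 T i m‖
        ≤ Real.exp (∑ j ∈ Finset.range m, F (q (i + j + 1) - q (i + j))) - 1 :=
  stmt9_general q S T F hT hScomp hST
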